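/- arXiv:2605.12317 — 7 statements merged into one kernel-verified Lean document; each statement's English description precedes it below -/
import Mathlib

section
/- In a metric space, if a size-k center selection X ⊆ M satisfies mPJR+, then X satisfies mPJR. That is: if for every ℓ ∈ {1,…,k}, every unselected center c ∈ M \ X, and every group S ⊆ N with |S| ≥ ℓ·n/k one has |X ∩ A_{r(c,S)}(S)| ≥ ℓ where r(c,S) := max_{i∈S} d(i,c), then for every radius r ≥ 0, every ℓ ∈ {1,…,k}, and every group S ⊆ N with |S| ≥ ℓ·n/k satisfying |⋂_{i∈S}(B(i,r) ∩ M)| ≥ ℓ, one has |X ∩ A_r(S)| ≥ ℓ. -/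
/-- mPJR+ implies mPJR. -/
theorem stmt3 {U : Type*} [MetricSpace U] [DecidableEq U]
    (N M X : Finset U) (k : ℕ) (hk : 1 ≤ k) (hX : X ⊆ M) (hXcard : X.card = k)
    (hplus : ∀ ℓ : ℕ, 1 ≤ ℓ → ℓ ≤ k → ∀ c ∈ M \ X,
      ∀ S ⊆ N, ∀ hS : S.Nonempty,
        (ℓ : ℝ) * N.card / k ≤ S.card →
        ℓ ≤ (X ∩ (M.filter fun x => ∃ i ∈ S, dist i x ≤ S.sup' hS fun i => dist i c)).card) :
    ∀ r : ℝ, 0 ≤ r → ∀ ℓ : ℕ, 1 ≤ ℓ → ℓ ≤ k →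
      ∀ S ⊆ N, S.Nonempty →
        (ℓ : ℝ) * N.card / k ≤ S.card →
        ℓ ≤ (M.filter fun x => ∀ i ∈ S, dist i x ≤ r).card →
        ℓ ≤ (X ∩ (M.filter fun x => ∃ i ∈ S, dist i x ≤ r)).card := by
  intro r hr ℓ hℓ1 hℓk S hSN hS hSq hT
  set T := M.filter fun x => ∀ i ∈ S, dist i x ≤ r with hTdef
  by_cases hsub : T ⊆ X
  · -- T ⊆ X ∩ A_r
    refine le_trans hT (Finset.card_le_card ?_)
    intro x hx
    have hxT := hx
    rw [hTdef, Finset.mem_filter] at hxT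
    refine Finset.mem_inter.2 ⟨hsub hx, Finset.mem_filter.2 ⟨hxT.1, ?_⟩⟩
    obtain ⟨i, hi⟩ := hS
    exact ⟨i, hi, hxT.2 i hi⟩
  · obtain ⟨c, hcT, hcX⟩ := Finset.not_subset.1 hsub
    rw [hTdef, Finset.mem_filter] at hcT
    have hcMX : c ∈ M \ X := Finset.mem_sdiff.2 ⟨hcT.1, hcX⟩
    have h := hplus ℓ hℓ1 hℓk c hcMX S hSN hS hSq
    refine le_trans h (Finset.card_le_card ?_)
    intro x hx
    rw [Finset.mem_inter, Finset.mem_filter] at hx ⊢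
    obtain ⟨hxX, hxM, i, hiS, hdi⟩ := hx
    exact ⟨hxX, hxM, i, hiS, le_trans hdi (Finset.sup'_le _ _ fun j hj => hcT.2 j hj)⟩
end

section
/- If a center selection X satisfies γ-DC-mPJR+ for some γ ≥ 1, then X satisfies (γ+2)-mPJR+: for every ℓ ∈ {1,…,k}, every unselected center c ∈ M \ X, and every nonempty group S ⊆ N with |S| ≥ ℓ·n/k, it holds that |X ∩ A_{(γ+2)·r(c,S)}(S)| ≥ ℓ, where r(c,S) := max_{i∈S} d(i,c). -/
open Finset

variable {U : Type*} [MetricSpace U] [DecidableEq U]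

/-- Group approval set: candidates of `M` within distance `r` of some agent of `S`. -/
noncomputable def approvalSet (M : Finset U) (r : ℝ) (S : Finset U) : Finset U :=
  M.filter fun x => ∃ i ∈ S, dist i x ≤ r

/-- `r_{c,ℓ}`: the minimum radius capturing at least `t` agents of `N` around `c`. -/
noncomputable def rCL (N : Finset U) (c : U) (t : ℝ) : ℝ :=
  sInf {r : ℝ | 0 ≤ r ∧ t ≤ ((N.filter fun i => dist i c ≤ r).card : ℝ)}

/-- The default coalition `N_{c,ℓ}`. -/
noncomputable def defCoal (N : Finset U) (c : U) (t : ℝ) : Finset U :=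
  N.filter fun i => dist i c ≤ rCL N c t

/-- γ-DC-mPJR+ implies (γ+2)-mPJR+. -/
theorem stmt5 (N M X : Finset U) (k : ℕ) (hk : 1 ≤ k) (hX : X ⊆ M) (hXcard : X.card = k)
    (γ : ℝ) (hγ : 1 ≤ γ)
    (hDC : ∀ c ∈ M \ X, ∀ ℓ : ℕ, 1 ≤ ℓ → ℓ ≤ k →
      (ℓ : ℝ) * N.card / k ≤ N.card →
      ℓ ≤ (X ∩ approvalSet M (γ * rCL N c ((ℓ : ℝ) * N.card / k))
            (defCoal N c ((ℓ : ℝ) * N.card / k))).card) :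
    ∀ ℓ : ℕ, 1 ≤ ℓ → ℓ ≤ k → ∀ c ∈ M \ X,
      ∀ S ⊆ N, ∀ hS : S.Nonempty,
        (ℓ : ℝ) * N.card / k ≤ S.card →
        ℓ ≤ (X ∩ approvalSet M ((γ + 2) * (S.sup' hS fun i => dist i c)) S).card := by
  intro ℓ hℓ1 hℓk c hc S hSN hS hScard
  set t : ℝ := (ℓ : ℝ) * N.card / k with ht
  have rSdef : ∃ r : ℝ, r = S.sup' hS (fun i => dist i c) := ⟨_, rfl⟩
  obtain ⟨rS, hrSdef⟩ := rSdef
  rw [← hrSdef]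
  have hrS0 : 0 ≤ rS := by
    obtain ⟨i, hi⟩ := hS
    exact le_trans dist_nonneg (hrSdef ▸ Finset.le_sup' (fun i => dist i c) hi)
  have hSsub : S ⊆ N.filter fun i => dist i c ≤ rS := fun i hi =>
    Finset.mem_filter.2 ⟨hSN hi, hrSdef ▸ Finset.le_sup' (fun i => dist i c) hi⟩
  have hmem : rS ∈ {r : ℝ | 0 ≤ r ∧ t ≤ ((N.filter fun i => dist i c ≤ r).card : ℝ)} := by
    refine ⟨hrS0, le_trans hScard ?_⟩
    exact_mod_cast Finset.card_le_card hSsub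
  have hbdd : BddBelow {r : ℝ | 0 ≤ r ∧ t ≤ ((N.filter fun i => dist i c ≤ r).card : ℝ)} :=
    ⟨0, fun r hr => hr.1⟩
  have hrle : rCL N c t ≤ rS := csInf_le hbdd hmem
  have hr0 : 0 ≤ rCL N c t := le_csInf ⟨rS, hmem⟩ (fun r hr => hr.1)
  have htN : t ≤ (N.card : ℝ) := le_trans hScard (by exact_mod_cast Finset.card_le_card hSN)
  have hDC' := hDC c hc ℓ hℓ1 hℓk htN
  refine le_trans hDC' (Finset.card_le_card ?_)
  intro x hx
  rw [Finset.mem_inter] at hx ⊢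
  obtain ⟨hxX, hxA⟩ := hx
  rw [approvalSet, Finset.mem_filter] at hxA
  obtain ⟨hxM, j, hjD, hjx⟩ := hxA
  refine ⟨hxX, Finset.mem_filter.2 ⟨hxM, ?_⟩⟩
  obtain ⟨i, hi⟩ := hS
  rw [defCoal, Finset.mem_filter] at hjD
  refine ⟨i, hi, ?_⟩
  have h1 : dist i x ≤ dist i c + dist c j + dist j x := dist_triangle4 i c j x
  have h2 : dist i c ≤ rS := hrSdef ▸ Finset.le_sup' (fun i => dist i c) hi
  have h3 : dist c j ≤ rCL N c t := by rw [dist_comm]; exact hjD.2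
  have h4 : dist j x ≤ γ * rCL N c t := hjx
  nlinarith [hjD.2]
end

section
/- A center selection X violates mPJR+ if and only if there exist an unselected center c ∈ M \ X, a radius r ∈ {d(i,c) : i ∈ N}, and a proper subset Y ⊊ X such that |S(c,r,Y)| ≥ (|Y|+1)·n/k, where S(c,r,Y) := {i ∈ N : d(i,c) ≤ r and d(i,x) > r for all x ∈ X \ Y}. -/
open Finset

/-- X violates mPJR+ iff there is an unselected center c, a radius
r ∈ {d(i,c) : i ∈ N}, and Y ⊊ X with |S(c,r,Y)| ≥ (|Y|+1)·n/k. -/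
theorem stmt7 {U : Type*} [MetricSpace U] [DecidableEq U]
    (N M X : Finset U) (k : ℕ) (hk : 1 ≤ k) (hX : X ⊆ M) (hXcard : X.card = k) :
    (¬ ∀ ℓ : ℕ, 1 ≤ ℓ → ℓ ≤ k → ∀ c ∈ M \ X,
        ∀ S ⊆ N, ∀ hS : S.Nonempty,
          (ℓ : ℝ) * N.card / k ≤ S.card →
          ℓ ≤ (X ∩ (M.filter fun x => ∃ i ∈ S, dist i x ≤ S.sup' hS fun i => dist i c)).card)
    ↔
    (∃ c ∈ M \ X, ∃ i₀ ∈ N, ∃ Y : Finset U, Y ⊂ X ∧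
      ((Y.card : ℝ) + 1) * N.card / k ≤
        ((N.filter fun i => dist i c ≤ dist i₀ c ∧
            ∀ x ∈ X \ Y, dist i₀ c < dist i x).card : ℝ)) := by
  constructor
  · intro h
    push_neg at h
    obtain ⟨ℓ, hℓ1, hℓk, c, hc, S, hSN, hS, hScard, hlt⟩ := h
    obtain ⟨i₀, hi₀S, hsup⟩ := Finset.exists_mem_eq_sup' hS (fun i => dist i c)
    set Y := X ∩ (M.filter fun x => ∃ i ∈ S, dist i x ≤ S.sup' hS fun i => dist i c) with hY
    refine ⟨c, hc, i₀, hSN hi₀S, Y, ?_, ?_⟩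
    · rw [Finset.ssubset_iff_subset_ne]
      refine ⟨Finset.inter_subset_left, fun hEq => ?_⟩
      rw [hEq, hXcard] at hlt
      omega
    · have hsub : S ⊆ N.filter fun i => dist i c ≤ dist i₀ c ∧
          ∀ x ∈ X \ Y, dist i₀ c < dist i x := by
        intro i hi
        rw [Finset.mem_filter]
        refine ⟨hSN hi, ?_, ?_⟩
        · rw [← hsup]
          exact Finset.le_sup' (fun i => dist i c) hi
        · intro x hx
          rw [Finset.mem_sdiff] at hx
          obtain ⟨hxX, hxY⟩ := hx
          have hxM : x ∈ M := hX hxX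
          have : x ∉ M.filter fun x => ∃ i ∈ S, dist i x ≤ S.sup' hS fun i => dist i c := by
            intro hmem
            exact hxY (Finset.mem_inter.mpr ⟨hxX, hmem⟩)
          rw [Finset.mem_filter] at this
          push_neg at this
          have h2 := this hxM i hi
          rw [hsup] at h2
          exact h2
      have h1 : (S.card : ℝ) ≤ ((N.filter fun i => dist i c ≤ dist i₀ c ∧
          ∀ x ∈ X \ Y, dist i₀ c < dist i x).card : ℝ) := by
        exact_mod_cast Finset.card_le_card hsub
      have h2 : ((Y.card : ℝ) + 1) ≤ (ℓ : ℝ) := by exact_mod_cast hlt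
      have h3 : ((Y.card : ℝ) + 1) * N.card / k ≤ (ℓ : ℝ) * N.card / k := by
        gcongr
      linarith
  · rintro ⟨c, hc, i₀, hi₀, Y, hYX, hcard⟩
    intro h
    set S := N.filter fun i => dist i c ≤ dist i₀ c ∧
        ∀ x ∈ X \ Y, dist i₀ c < dist i x with hSdef
    have hNpos : 0 < (N.card : ℝ) := by
      exact_mod_cast Finset.card_pos.mpr ⟨i₀, hi₀⟩
    have hkpos : 0 < (k : ℝ) := by exact_mod_cast hk
    have hSpos : 0 < (S.card : ℝ) := by
      refine lt_of_lt_of_le ?_ hcard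
      positivity
    have hSne : S.Nonempty := Finset.card_pos.mp (by exact_mod_cast hSpos)
    have hYlt : Y.card < k := by
      have := Finset.card_lt_card hYX
      omega
    have key := h (Y.card + 1) (by omega) (by omega) c hc S (Finset.filter_subset _ _)
      hSne (by push_cast; exact hcard)
    have hsub : X ∩ (M.filter fun x => ∃ i ∈ S, dist i x ≤ S.sup' hSne fun i => dist i c)
        ⊆ Y := by
      intro x hx
      rw [Finset.mem_inter, Finset.mem_filter] at hx
      obtain ⟨hxX, _, i, hiS, hdix⟩ := hx
      by_contra hxY
      have hi := hiS
      rw [hSdef, Finset.mem_filter] at hi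
      have hlt := hi.2.2 x (Finset.mem_sdiff.mpr ⟨hxX, hxY⟩)
      have hle : (S.sup' hSne fun i => dist i c) ≤ dist i₀ c := by
        apply Finset.sup'_le
        intro j hj
        rw [hSdef, Finset.mem_filter] at hj
        exact hj.2.1
      linarith
    have := Finset.card_le_card hsub
    omega
end

section
/- Fix a center c ∈ M \ X. There exists a set S ⊆ B(c,r) ∩ N with f_{c,r}(S) ≤ −1 for some r ∈ {d(i,c) : i ∈ N}, where f_{c,r}(S) := |X ∩ A_r(S)| − |S|·k/n, if and only if there exist ℓ ∈ {1,…,k} and a nonempty group S ⊆ N with |S| ≥ ℓ·n/k and |X ∩ A_{r(c,S)}(S)| < ℓ, where r(c,S) := max_{i∈S} d(i,c). -/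
open Finset

/-- for a fixed unselected center c, the submodular function
f_{c,r}(S) = |X ∩ A_r(S)| − |S|·k/n attains a value ≤ −1 at some radius
r ∈ {d(i,c) : i ∈ N} iff c witnesses an mPJR+ violation. -/
theorem stmt9 {U : Type*} [MetricSpace U] [DecidableEq U]
    (N M X : Finset U) (k : ℕ) (hk : 1 ≤ k) (hN : N.Nonempty)
    (hX : X ⊆ M) (hXcard : X.card = k)
    (c : U) (hc : c ∈ M \ X) :
    (∃ i₀ ∈ N, ∃ S ⊆ N.filter fun i => dist i c ≤ dist i₀ c,
      ((X ∩ (M.filter fun x => ∃ i ∈ S, dist i x ≤ dist i₀ c)).card : ℝ)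
        - (S.card : ℝ) * k / N.card ≤ -1)
    ↔
    (∃ ℓ : ℕ, 1 ≤ ℓ ∧ ℓ ≤ k ∧ ∃ S ⊆ N, ∃ hS : S.Nonempty,
      (ℓ : ℝ) * N.card / k ≤ S.card ∧
      (X ∩ (M.filter fun x => ∃ i ∈ S, dist i x ≤ S.sup' hS fun i => dist i c)).card < ℓ) := by
  have hn : 0 < (N.card : ℝ) := by exact_mod_cast hN.card_pos
  have hk' : 0 < (k : ℝ) := by exact_mod_cast hk
  constructor
  · rintro ⟨i₀, hi₀, S, hSsub, hf⟩
    set A := X ∩ (M.filter fun x => ∃ i ∈ S, dist i x ≤ dist i₀ c) with hA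
    have hm : (A.card : ℝ) + 1 ≤ (S.card : ℝ) * k / N.card := by linarith
    have hSN : S ⊆ N := hSsub.trans (filter_subset _ _)
    have hScard : (S.card : ℝ) ≤ N.card := by exact_mod_cast card_le_card hSN
    have hSk : ((A.card : ℝ) + 1) * N.card ≤ S.card * k := (le_div_iff₀ hn).mp hm
    have hAnn : (0:ℝ) ≤ (A.card : ℝ) := Nat.cast_nonneg _
    have hℓk : A.card + 1 ≤ k := by
      have : ((A.card : ℝ) + 1) ≤ k := by nlinarith
      exact_mod_cast this
    have hSpos : S.Nonempty := by
      rw [← card_pos]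
      by_contra h
      push_neg at h
      interval_cases h' : S.card
      · simp [h'] at hSk; nlinarith
    refine ⟨A.card + 1, le_add_self, hℓk, S, hSN, hSpos, ?_, ?_⟩
    · rw [div_le_iff₀ hk']
      push_cast
      exact hSk
    · have hsup : (S.sup' hSpos fun i => dist i c) ≤ dist i₀ c :=
        sup'_le _ _ fun i hi => (mem_filter.mp (hSsub hi)).2
      have hsubset : X ∩ (M.filter fun x => ∃ i ∈ S, dist i x ≤ S.sup' hSpos fun i => dist i c) ⊆ A := by
        intro x hx
        simp only [hA, mem_inter, mem_filter] at hx ⊢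
        obtain ⟨hx1, hx2, i, hiS, hle⟩ := hx
        exact ⟨hx1, hx2, i, hiS, le_trans hle hsup⟩
      exact Nat.lt_succ_of_le (card_le_card hsubset)
  · rintro ⟨ℓ, hℓ1, hℓk, S, hSN, hS, hquota, hcard⟩
    obtain ⟨i₀, hi₀S, hmax⟩ := S.exists_mem_eq_sup' hS fun i => dist i c
    rw [hmax] at hcard
    refine ⟨i₀, hSN hi₀S, S, ?_, ?_⟩
    · intro i hi
      exact mem_filter.mpr ⟨hSN hi, hmax ▸ le_sup' (fun i => dist i c) hi⟩
    · have h1 : ((X ∩ (M.filter fun x => ∃ i ∈ S, dist i x ≤ dist i₀ c)).card : ℝ) + 1 ≤ ℓ := by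
        exact_mod_cast hcard
      have h2 : (ℓ : ℝ) ≤ (S.card : ℝ) * k / N.card := by
        rw [le_div_iff₀ hn]
        rw [div_le_iff₀ hk'] at hquota
        linarith
      linarith
end

section
/- In the approval setting, a committee X satisfying PJR+ satisfies PJR: if for every ℓ ∈ [k], every unselected candidate c ∈ M \ X, and every group S ⊆ N with |S| ≥ ℓ·n/k and c ∈ 𝒜_i for all i ∈ S one has |X ∩ ⋃_{i∈S}𝒜_i| ≥ ℓ, then for every ℓ ∈ [k] and every group S ⊆ N with |S| ≥ ℓ·n/k and |⋂_{i∈S}𝒜_i| ≥ ℓ one has |X ∩ ⋃_{i∈S}𝒜_i| ≥ ℓ. -/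
open Finset

/-- in the approval setting, PJR+ implies PJR. -/
theorem stmt11 {V : Type*} [DecidableEq V]
    (N M X : Finset V) (k : ℕ) (hk : 1 ≤ k) (hX : X ⊆ M) (hXcard : X.card = k)
    (𝒜 : V → Finset V) (h𝒜 : ∀ i ∈ N, 𝒜 i ⊆ M)
    (hplus : ∀ ℓ : ℕ, 1 ≤ ℓ → ℓ ≤ k → ∀ c ∈ M \ X,
      ∀ S ⊆ N, S.Nonempty →
        (ℓ : ℝ) * N.card / k ≤ S.card →
        (∀ i ∈ S, c ∈ 𝒜 i) →
        ℓ ≤ (X ∩ S.biUnion 𝒜).card) :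
    ∀ ℓ : ℕ, 1 ≤ ℓ → ℓ ≤ k → ∀ S ⊆ N, S.Nonempty →
      (ℓ : ℝ) * N.card / k ≤ S.card →
      ℓ ≤ (M.filter fun cand => ∀ i ∈ S, cand ∈ 𝒜 i).card →
      ℓ ≤ (X ∩ S.biUnion 𝒜).card := by
  intro ℓ hℓ1 hℓk S hSN hSne hquota hcommon
  by_cases hsub : M.filter (fun cand => ∀ i ∈ S, cand ∈ 𝒜 i) ⊆ X
  · calc ℓ ≤ (M.filter fun cand => ∀ i ∈ S, cand ∈ 𝒜 i).card := hcommon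
      _ ≤ (X ∩ S.biUnion 𝒜).card := by
        apply card_le_card
        intro c hc
        rw [mem_filter] at hc
        obtain ⟨i, hi⟩ := hSne
        exact mem_inter.2 ⟨hsub (mem_filter.2 hc),
          mem_biUnion.2 ⟨i, hi, hc.2 i hi⟩⟩
  · obtain ⟨c, hcmem, hcX⟩ := not_subset.1 hsub
    rw [mem_filter] at hcmem
    exact hplus ℓ hℓ1 hℓk c (mem_sdiff.2 ⟨hcmem.1, hcX⟩) S hSN hSne hquota hcmem.2
end

section
/- Biclique reduction correctness: let G = (L, R, E) be a bipartite graph with |L| = |R| = 2t−1 for some t ≥ 1. Construct an approval instance with voters N = L, candidates M = R ∪ {z} (z ∉ R), committee X = R, k = 2t−1, where voter u approves z and approves w ∈ R iff {u,w} ∉ E. Then G contains a t×t biclique (sets L' ⊆ L, R' ⊆ R with |L'| = |R'| = t and every vertex of L' adjacent to every vertex of R') if and only if there exists S ⊆ N with |S| ≥ t and |X ∩ ⋃_{u∈S} 𝒜_u| < t. -/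
open Finset

attribute [local instance] Classical.propDecidable

/-- correctness of the biclique reduction. -/
theorem stmt12 {V : Type*} (L R : Finset V) (hLR : Disjoint L R)
    (t : ℕ) (ht : 1 ≤ t) (hL : L.card = 2 * t - 1) (hR : R.card = 2 * t - 1)
    (E : V → V → Prop) (z : V) (hzR : z ∉ R) (hzL : z ∉ L)
    (𝒜 : V → Finset V)
    (h𝒜 : ∀ u ∈ L, 𝒜 u = insert z (R.filter fun w => ¬ E u w)) :
    (∃ L' ⊆ L, ∃ R' ⊆ R, L'.card = t ∧ R'.card = t ∧
        ∀ u ∈ L', ∀ w ∈ R', E u w)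
    ↔
    (∃ S ⊆ L, t ≤ S.card ∧ (R ∩ S.biUnion 𝒜).card < t) := by
  constructor
  · rintro ⟨L', hL', R', hR', hcardL, hcardR, hbi⟩
    refine ⟨L', hL', hcardL.ge, ?_⟩
    have hsub : R ∩ L'.biUnion 𝒜 ⊆ R \ R' := by
      intro w hw
      simp only [mem_inter, mem_biUnion] at hw
      obtain ⟨hwR, u, huL', hwA⟩ := hw
      rw [h𝒜 u (hL' huL')] at hwA
      simp only [mem_insert, mem_filter] at hwA
      rcases hwA with rfl | ⟨_, hne⟩
      · exact absurd hwR hzR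
      · exact mem_sdiff.mpr ⟨hwR, fun hwR' => hne (hbi u huL' w hwR')⟩
    calc (R ∩ L'.biUnion 𝒜).card ≤ (R \ R').card := card_le_card hsub
      _ = R.card - R'.card := card_sdiff_of_subset hR'
      _ = (2 * t - 1) - t := by rw [hR, hcardR]
      _ < t := by omega
  · rintro ⟨S, hS, hScard, hlt⟩
    obtain ⟨L', hL'S, hL'card⟩ := exists_subset_card_eq hScard
    have hRB : t ≤ (R \ (R ∩ S.biUnion 𝒜)).card := by
      rw [card_sdiff_of_subset inter_subset_left, hR]
      omega
    obtain ⟨R', hR'sub, hR'card⟩ := exists_subset_card_eq hRB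
    refine ⟨L', hL'S.trans hS, R', hR'sub.trans sdiff_subset, hL'card, hR'card, ?_⟩
    intro u huL' w hwR'
    have hw := hR'sub hwR'
    simp only [mem_sdiff, mem_inter, mem_biUnion, not_and, not_exists] at hw
    obtain ⟨hwR, hno⟩ := hw
    by_contra hnE
    exact hno hwR u (hL'S huL') (by
      rw [h𝒜 u (hS (hL'S huL'))]
      exact mem_insert_of_mem (mem_filter.mpr ⟨hwR, hnE⟩))
end

section
/- Under the approval-to-metric embedding (d(i,c) = 1 if c ∈ 𝒜_i, else 2), a committee X of size k violates mPJR (at some radius r ≥ 0) if and only if X violates approval PJR; moreover, any metric violation must occur at a radius r with 1 ≤ r < 2, and any approval violation yields a metric violation at radius r = 1. -/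
open Finset

attribute [local instance] Classical.propDecidable

/-- under the approval-to-metric embedding, X violates mPJR at
some radius r ≥ 0 iff X violates approval PJR; any metric violation occurs at
a radius 1 ≤ r < 2, and any approval violation yields one at r = 1. -/
theorem stmt15 {V : Type*}
    (N M X : Finset V) (hNM : Disjoint N M)
    (k : ℕ) (hk : 1 ≤ k) (hX : X ⊆ M) (hXcard : X.card = k)
    (𝒜 : V → Finset V) (h𝒜 : ∀ i ∈ N, 𝒜 i ⊆ M)
    (d : V → V → ℝ)
    (hd : ∀ i ∈ N, ∀ c ∈ M, d i c = if c ∈ 𝒜 i then 1 else 2)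
    (mPJRviol : ℝ → Prop)
    (hmviol : ∀ r : ℝ, mPJRviol r ↔
      ∃ ℓ : ℕ, 1 ≤ ℓ ∧ ℓ ≤ k ∧ ∃ S ⊆ N, S.Nonempty ∧
        (ℓ : ℝ) * N.card / k ≤ S.card ∧
        ℓ ≤ (M.filter fun c => ∀ i ∈ S, d i c ≤ r).card ∧
        (X ∩ (M.filter fun c => ∃ i ∈ S, d i c ≤ r)).card < ℓ)
    (PJRviol : Prop)
    (hpviol : PJRviol ↔
      ∃ ℓ : ℕ, 1 ≤ ℓ ∧ ℓ ≤ k ∧ ∃ S ⊆ N, S.Nonempty ∧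
        (ℓ : ℝ) * N.card / k ≤ S.card ∧
        ℓ ≤ (M.filter fun c => ∀ i ∈ S, c ∈ 𝒜 i).card ∧
        (X ∩ (M.filter fun c => ∃ i ∈ S, c ∈ 𝒜 i)).card < ℓ) :
    ((∃ r : ℝ, 0 ≤ r ∧ mPJRviol r) ↔ PJRviol) ∧
    (∀ r : ℝ, 0 ≤ r → mPJRviol r → 1 ≤ r ∧ r < 2) ∧
    (PJRviol → mPJRviol 1) := by
  -- basic fact about d on valid pairs
  have hdval : ∀ i ∈ N, ∀ c ∈ M, ∀ r : ℝ, 1 ≤ r → r < 2 →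
      (d i c ≤ r ↔ c ∈ 𝒜 i) := by
    intro i hi c hc r h1 h2
    rw [hd i hi c hc]
    by_cases h : c ∈ 𝒜 i <;> simp [h]
    · linarith
    · linarith
  have hdge1 : ∀ i ∈ N, ∀ c ∈ M, (1:ℝ) ≤ d i c := by
    intro i hi c hc
    rw [hd i hi c hc]
    by_cases h : c ∈ 𝒜 i <;> simp [h]
  have hdle2 : ∀ i ∈ N, ∀ c ∈ M, d i c ≤ 2 := by
    intro i hi c hc
    rw [hd i hi c hc]
    by_cases h : c ∈ 𝒜 i <;> simp [h]
  -- key: for 1 ≤ r < 2, mPJRviol r ↔ PJRviol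
  have key : ∀ r : ℝ, 1 ≤ r → r < 2 → (mPJRviol r ↔ PJRviol) := by
    intro r h1 h2
    rw [hmviol, hpviol]
    apply exists_congr; intro ℓ
    apply and_congr_right; intro _
    apply and_congr_right; intro _
    constructor
    · rintro ⟨S, hSN, hSne, hq, hcov, hrep⟩
      refine ⟨S, hSN, hSne, hq, ?_, ?_⟩
      · refine le_trans hcov (le_of_eq ?_)
        congr 1
        apply Finset.filter_congr
        intro c hc
        exact forall₂_congr fun i hi => hdval i (hSN hi) c hc r h1 h2
      · refine lt_of_le_of_lt (le_of_eq ?_) hrep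
        congr 2
        apply Finset.filter_congr
        intro c hc
        simpa using exists₂_congr fun i hi => (hdval i (hSN hi) c hc r h1 h2).symm
    · rintro ⟨S, hSN, hSne, hq, hcov, hrep⟩
      refine ⟨S, hSN, hSne, hq, ?_, ?_⟩
      · refine le_trans hcov (le_of_eq ?_)
        congr 1
        apply Finset.filter_congr
        intro c hc
        exact forall₂_congr fun i hi => (hdval i (hSN hi) c hc r h1 h2).symm
      · refine lt_of_le_of_lt (le_of_eq ?_) hrep
        congr 2
        apply Finset.filter_congr
        intro c hc
        simpa using exists₂_congr fun i hi => hdval i (hSN hi) c hc r h1 h2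
  -- range: any metric violation has 1 ≤ r < 2
  have range : ∀ r : ℝ, 0 ≤ r → mPJRviol r → 1 ≤ r ∧ r < 2 := by
    intro r _ hm
    rw [hmviol] at hm
    obtain ⟨ℓ, hℓ1, hℓk, S, hSN, hSne, hq, hcov, hrep⟩ := hm
    constructor
    · by_contra h
      push_neg at h
      obtain ⟨i, hi⟩ := hSne
      have : (M.filter fun c => ∀ j ∈ S, d j c ≤ r) = ∅ := by
        apply Finset.filter_false_of_mem
        intro c hc hall
        have := hall i hi
        have := hdge1 i (hSN hi) c hc
        linarith
      rw [this] at hcov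
      simp at hcov
      omega
    · by_contra h
      push_neg at h
      obtain ⟨i, hi⟩ := hSne
      have hfil : (M.filter fun c => ∃ j ∈ S, d j c ≤ r) = M := by
        apply Finset.filter_true_of_mem
        intro c hc
        exact ⟨i, hi, le_trans (hdle2 i (hSN hi) c hc) h⟩
      rw [hfil, Finset.inter_eq_left.mpr hX, hXcard] at hrep
      omega
  refine ⟨?_, range, fun hp => (key 1 le_rfl one_lt_two).mpr hp⟩
  constructor
  · rintro ⟨r, hr0, hm⟩
    obtain ⟨h1, h2⟩ := range r hr0 hm
    exact (key r h1 h2).mp hm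
  · intro hp
    exact ⟨1, zero_le_one, (key 1 le_rfl one_lt_two).mpr hp⟩
end
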